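/- Let N be a finite player set, and suppose φ, ψ : G → ℝ^N are two value allocations on the space G of cooperative games on N (with ν(∅) = 0) that both satisfy symmetry (φ_{πi}(ν_π) = φ_i(ν) for all permutations π), efficiency (∑_{i∈C} φ_i(ν) = ν(C) for every carrier C of ν), and linearity (φ(aν + bω) = aφ(ν) + bφ(ω)). Then φ = ψ. -/

import Mathlib

/-- `C` is a carrier of the game `ν`: `ν S = ν (C ∩ S)` for all coalitions `S`. -/
def IsCarrier {ι : Type*} [DecidableEq ι] (ν : Finset ι → ℝ) (C : Finset ι) : Prop :=
  ∀ S : Finset ι, ν S = ν (C ∩ S)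

/-- The permutation game `ν_π`, defined by `ν_π (π S) = ν S`,
i.e. `ν_π T = ν (π⁻¹ T)`. -/
def permGame {ι : Type*} [DecidableEq ι] (π : Equiv.Perm ι) (ν : Finset ι → ℝ) :
    Finset ι → ℝ :=
  fun T => ν (T.image π.symm)

section ShapleyAux
open Finset
variable {ι : Type*} [DecidableEq ι]

/-- Unanimity game. -/
def unanGame (T : Finset ι) : Finset ι → ℝ := fun S => if T ⊆ S then 1 else 0

lemma unanGame_empty {T : Finset ι} (hT : T.Nonempty) : unanGame T ∅ = 0 := by
  simp [unanGame, subset_empty, hT.ne_empty]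

lemma unanGame_image_swap {T : Finset ι} {i j : ι} (hi : i ∈ T) (hj : j ∈ T) (S : Finset ι) :
    unanGame T (S.image (Equiv.swap i j)) = unanGame T S := by
  have key : ∀ S : Finset ι, T ⊆ S → T ⊆ S.image (Equiv.swap i j) := by
    intro S hTS x hx
    rw [mem_image]
    refine ⟨Equiv.swap i j x, hTS ?_, Equiv.swap_apply_self i j x⟩
    rcases eq_or_ne x i with rfl | hxi
    · simpa [Equiv.swap_apply_left] using hj
    rcases eq_or_ne x j with rfl | hxj
    · simpa [Equiv.swap_apply_right] using hi
    · simpa [Equiv.swap_apply_of_ne_of_ne hxi hxj] using hx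
  unfold unanGame
  congr 1
  simp only [eq_iff_iff]
  constructor
  · intro h
    have := key _ h
    rwa [Finset.image_image, show ((Equiv.swap i j : ι → ι) ∘ (Equiv.swap i j)) = id from
      funext fun x => Equiv.swap_apply_self i j x, Finset.image_id] at this
  · exact key S

lemma isCarrier_unan {T : Finset ι} : IsCarrier (unanGame T) T := by
  intro S
  unfold unanGame
  congr 1
  simp only [eq_iff_iff, subset_inter_iff]
  exact ⟨fun h => ⟨subset_rfl, h⟩, fun h => h.2⟩

lemma isCarrier_unan_insert {T : Finset ι} (i : ι) : IsCarrier (unanGame T) (insert i T) := by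
  intro S
  unfold unanGame
  congr 1
  simp only [eq_iff_iff]
  constructor
  · intro h x hx
    exact mem_inter.2 ⟨mem_insert_of_mem hx, h hx⟩
  · intro h x hx
    exact (mem_inter.1 (h hx)).2

lemma sum_pow_neg_one_real {α : Type*} [DecidableEq α] (x : Finset α) :
    ∑ m ∈ x.powerset, (-1:ℝ)^m.card = if x = ∅ then 1 else 0 := by
  have h := Finset.sum_powerset_neg_one_pow_card (x := x)
  calc ∑ m ∈ x.powerset, (-1:ℝ)^m.card
      = ((∑ m ∈ x.powerset, (-1:ℤ)^m.card : ℤ) : ℝ) := by push_cast; rfl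
    _ = _ := by rw [h]; split_ifs <;> simp

lemma key_sum {ι : Type*} [DecidableEq ι] {R S : Finset ι} (hRS : R ⊆ S) :
    ∑ T ∈ S.powerset.filter (fun T => R ⊆ T), (-1:ℝ)^(T.card - R.card)
      = if R = S then 1 else 0 := by
  have := Finset.sum_nbij' (i := fun T => T \ R) (j := fun U => U ∪ R)
    (s := S.powerset.filter (fun T => R ⊆ T)) (t := (S \ R).powerset)
    (f := fun T => (-1:ℝ)^(T.card - R.card)) (g := fun U => (-1:ℝ)^U.card)
    (by intro T hT
        simp only [mem_filter, mem_powerset] at hT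
        simp only [mem_powerset]
        exact sdiff_subset_sdiff hT.1 subset_rfl)
    (by intro U hU
        simp only [mem_powerset] at hU
        simp only [mem_filter, mem_powerset]
        exact ⟨union_subset (hU.trans (sdiff_subset)) hRS, subset_union_right⟩)
    (by intro T hT
        simp only [mem_filter, mem_powerset] at hT
        exact sdiff_union_of_subset hT.2)
    (by intro U hU
        simp only [mem_powerset] at hU
        have : Disjoint U R := disjoint_of_subset_left hU sdiff_disjoint
        exact union_sdiff_cancel_right this)
    (by intro T hT
        simp only [mem_filter, mem_powerset] at hT
        show (-1:ℝ)^(T.card - R.card) = (-1:ℝ)^((T \ R).card)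
        rw [card_sdiff_of_subset hT.2])
  have hb : ∑ T ∈ S.powerset.filter (fun T => R ⊆ T), (-1:ℝ)^(T.card - R.card)
      = ∑ U ∈ (S \ R).powerset, (-1:ℝ)^U.card := this
  rw [hb, sum_pow_neg_one_real]
  by_cases h : R = S
  · subst h; simp
  · rw [if_neg h, if_neg]
    intro hc
    exact h (subset_antisymm hRS (sdiff_eq_empty_iff_subset.mp hc))

lemma mobius {ι : Type*} [DecidableEq ι] (ν : Finset ι → ℝ) (S : Finset ι) :
    ∑ T ∈ S.powerset, ∑ R ∈ T.powerset, (-1:ℝ)^(T.card - R.card) * ν R = ν S := by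
  have step1 : ∀ T ∈ S.powerset,
      ∑ R ∈ T.powerset, (-1:ℝ)^(T.card - R.card) * ν R
        = ∑ R ∈ S.powerset, if R ⊆ T then (-1:ℝ)^(T.card - R.card) * ν R else 0 := by
    intro T hT
    rw [mem_powerset] at hT
    rw [← Finset.sum_filter]
    apply Finset.sum_congr _ (fun _ _ => rfl)
    ext R
    simp only [mem_filter, mem_powerset]
    exact ⟨fun h => ⟨h.trans hT, h⟩, fun h => h.2⟩
  rw [Finset.sum_congr rfl step1, Finset.sum_comm]
  have step2 : ∀ R ∈ S.powerset,
      (∑ T ∈ S.powerset, if R ⊆ T then (-1:ℝ)^(T.card - R.card) * ν R else 0)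
        = (if R = S then 1 else 0) * ν R := by
    intro R hR
    rw [mem_powerset] at hR
    rw [Finset.sum_ite, Finset.sum_const_zero, add_zero, ← Finset.sum_mul, key_sum hR]
  rw [Finset.sum_congr rfl step2]
  simp only [ite_mul, one_mul, zero_mul]
  rw [Finset.sum_ite_eq' S.powerset S ν]
  rw [if_pos (mem_powerset_self S)]

lemma unan_value {ι : Type*} [Fintype ι] [DecidableEq ι]
    (φ : (Finset ι → ℝ) → ι → ℝ)
    (hsym : ∀ (π : Equiv.Perm ι) (ν : Finset ι → ℝ), ν ∅ = 0 →
      ∀ i, φ (permGame π ν) (π i) = φ ν i)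
    (heff : ∀ (ν : Finset ι → ℝ), ν ∅ = 0 →
      ∀ C : Finset ι, IsCarrier ν C → ∑ i ∈ C, φ ν i = ν C)
    {T : Finset ι} (hT : T.Nonempty) (i : ι) :
    φ (unanGame T) i = if i ∈ T then 1 / (T.card : ℝ) else 0 := by
  have hTsum : ∑ j ∈ T, φ (unanGame T) j = 1 := by
    rw [heff _ (unanGame_empty hT) T isCarrier_unan, unanGame, if_pos subset_rfl]
  by_cases hi : i ∈ T
  · have hconst : ∀ j ∈ T, φ (unanGame T) j = φ (unanGame T) i := by
      intro j hj
      have hperm : permGame (Equiv.swap i j) (unanGame T) = unanGame T := by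
        funext S
        simp only [permGame, Equiv.symm_swap]
        exact unanGame_image_swap hi hj S
      have := hsym (Equiv.swap i j) (unanGame T) (unanGame_empty hT) i
      rw [hperm, Equiv.swap_apply_left] at this
      exact this
    rw [Finset.sum_congr rfl hconst, Finset.sum_const, nsmul_eq_mul] at hTsum
    rw [if_pos hi]
    have hcard : (T.card : ℝ) ≠ 0 := by
      exact_mod_cast Finset.card_ne_zero_of_mem hT.choose_spec
    field_simp
    linarith [hTsum]
  · rw [if_neg hi]
    have h2 : ∑ j ∈ insert i T, φ (unanGame T) j = 1 := by
      rw [heff _ (unanGame_empty hT) _ (isCarrier_unan_insert i), unanGame,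
        if_pos (subset_insert i T)]
    rw [Finset.sum_insert hi, hTsum] at h2
    linarith

lemma lin_sum {ι : Type*} [DecidableEq ι] {A : Type*} [DecidableEq A]
    (φ : (Finset ι → ℝ) → ι → ℝ)
    (hlin : ∀ (ν ω : Finset ι → ℝ), ν ∅ = 0 → ω ∅ = 0 → ∀ a b : ℝ,
      φ (fun S => a * ν S + b * ω S) = fun i => a * φ ν i + b * φ ω i)
    (s : Finset A) (c : A → ℝ) (f : A → Finset ι → ℝ) (hf : ∀ a ∈ s, f a ∅ = 0) :
    φ (fun S => ∑ a ∈ s, c a * f a S) = fun i => ∑ a ∈ s, c a * φ (f a) i := by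
  induction s using Finset.induction with
  | empty =>
    have h0 := hlin (fun _ => 0) (fun _ => 0) rfl rfl 0 0
    simp only [mul_zero, add_zero, zero_mul] at h0
    simpa using h0
  | insert a s ha ih =>
    have hsum0 : (fun S => ∑ b ∈ s, c b * f b S) ∅ = 0 := by
      simp only []
      rw [Finset.sum_eq_zero]
      intro b hb
      rw [hf b (mem_insert_of_mem hb), mul_zero]
    have hstep := hlin (f a) (fun S => ∑ b ∈ s, c b * f b S)
      (hf a (mem_insert_self a s)) hsum0 (c a) 1
    have hfun : (fun S => ∑ b ∈ insert a s, c b * f b S)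
        = (fun S => c a * f a S + 1 * ∑ b ∈ s, c b * f b S) := by
      funext S
      rw [Finset.sum_insert ha, one_mul]
    rw [hfun, hstep, ih (fun b hb => hf b (mem_insert_of_mem hb))]
    funext i
    rw [Finset.sum_insert ha, one_mul]

lemma decomp {ι : Type*} [Fintype ι] [DecidableEq ι] (ν : Finset ι → ℝ) (hν : ν ∅ = 0) :
    ν = fun S => ∑ T ∈ (Finset.univ : Finset ι).powerset.filter (fun T => T.Nonempty),
      (∑ R ∈ T.powerset, (-1:ℝ)^(T.card - R.card) * ν R) * unanGame T S := by
  funext S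
  have h1 : ∀ T ∈ (Finset.univ : Finset ι).powerset.filter (fun T => T.Nonempty),
      (∑ R ∈ T.powerset, (-1:ℝ)^(T.card - R.card) * ν R) * unanGame T S
        = if T ⊆ S then ∑ R ∈ T.powerset, (-1:ℝ)^(T.card - R.card) * ν R else 0 := by
    intro T _
    unfold unanGame
    split_ifs <;> simp
  rw [Finset.sum_congr rfl h1, ← Finset.sum_filter]
  have h2 : ((Finset.univ : Finset ι).powerset.filter (fun T => T.Nonempty)).filter
      (fun T => T ⊆ S) = S.powerset.filter (fun T => T.Nonempty) := by
    ext T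
    simp only [mem_filter, mem_powerset]
    constructor
    · rintro ⟨⟨-, h⟩, h'⟩; exact ⟨h', h⟩
    · rintro ⟨h, h'⟩; exact ⟨⟨subset_univ T, h'⟩, h⟩
  rw [h2]
  have h3 : ∑ T ∈ S.powerset.filter (fun T => T.Nonempty),
      ∑ R ∈ T.powerset, (-1:ℝ)^(T.card - R.card) * ν R
        = ∑ T ∈ S.powerset, ∑ R ∈ T.powerset, (-1:ℝ)^(T.card - R.card) * ν R := by
    apply Finset.sum_subset (filter_subset _ _)
    intro T hT hT'
    simp only [mem_filter, mem_powerset, not_and, Finset.not_nonempty_iff_eq_empty] at hT hT'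
    rw [hT' hT]
    simp [hν]
  rw [h3, mobius]

end ShapleyAux

theorem shapley_uniqueness {ι : Type*} [Fintype ι] [DecidableEq ι]
    (φ ψ : (Finset ι → ℝ) → ι → ℝ)
    (hφsym : ∀ (π : Equiv.Perm ι) (ν : Finset ι → ℝ), ν ∅ = 0 →
      ∀ i, φ (permGame π ν) (π i) = φ ν i)
    (hψsym : ∀ (π : Equiv.Perm ι) (ν : Finset ι → ℝ), ν ∅ = 0 →
      ∀ i, ψ (permGame π ν) (π i) = ψ ν i)
    (hφeff : ∀ (ν : Finset ι → ℝ), ν ∅ = 0 →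
      ∀ C : Finset ι, IsCarrier ν C → ∑ i ∈ C, φ ν i = ν C)
    (hψeff : ∀ (ν : Finset ι → ℝ), ν ∅ = 0 →
      ∀ C : Finset ι, IsCarrier ν C → ∑ i ∈ C, ψ ν i = ν C)
    (hφlin : ∀ (ν ω : Finset ι → ℝ), ν ∅ = 0 → ω ∅ = 0 → ∀ a b : ℝ,
      φ (fun S => a * ν S + b * ω S) = fun i => a * φ ν i + b * φ ω i)
    (hψlin : ∀ (ν ω : Finset ι → ℝ), ν ∅ = 0 → ω ∅ = 0 → ∀ a b : ℝ,
      ψ (fun S => a * ν S + b * ω S) = fun i => a * ψ ν i + b * ψ ω i) :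
    ∀ ν : Finset ι → ℝ, ν ∅ = 0 → φ ν = ψ ν := by
  intro ν hν
  have hf : ∀ T ∈ (Finset.univ : Finset ι).powerset.filter (fun T => T.Nonempty),
      unanGame T ∅ = 0 := fun T hT => unanGame_empty (Finset.mem_filter.mp hT).2
  have hdec := decomp ν hν
  calc φ ν = φ (fun S => ∑ T ∈ (Finset.univ : Finset ι).powerset.filter (fun T => T.Nonempty),
        (∑ R ∈ T.powerset, (-1:ℝ)^(T.card - R.card) * ν R) * unanGame T S) := by rw [← hdec]
    _ = fun i => ∑ T ∈ (Finset.univ : Finset ι).powerset.filter (fun T => T.Nonempty),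
        (∑ R ∈ T.powerset, (-1:ℝ)^(T.card - R.card) * ν R) * φ (unanGame T) i :=
      lin_sum φ hφlin _ _ _ hf
    _ = fun i => ∑ T ∈ (Finset.univ : Finset ι).powerset.filter (fun T => T.Nonempty),
        (∑ R ∈ T.powerset, (-1:ℝ)^(T.card - R.card) * ν R) * ψ (unanGame T) i := by
      funext i
      refine Finset.sum_congr rfl fun T hT => ?_
      rw [unan_value φ hφsym hφeff (Finset.mem_filter.mp hT).2,
        unan_value ψ hψsym hψeff (Finset.mem_filter.mp hT).2]
    _ = ψ (fun S => ∑ T ∈ (Finset.univ : Finset ι).powerset.filter (fun T => T.Nonempty),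
        (∑ R ∈ T.powerset, (-1:ℝ)^(T.card - R.card) * ν R) * unanGame T S) :=
      (lin_sum ψ hψlin _ _ _ hf).symm
    _ = ψ ν := by rw [← hdec]
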